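/- arXiv:2104.09867 — 4 statements merged into one kernel-verified Lean document; each statement's English description precedes it below -/
import Mathlib

section
/- There exists an absolute constant C such that for every 1 ≤ p < ∞, every u ∈ C_c^∞(ℝ) and every λ > 0, one has λ · ℒ^2(E_λ^{2/p}(u))^{1/p} ≤ C · ‖u'‖_{L^1(ℝ)} (i.e. the weak-L^p quasinorm of (u(x)−u(y))/|x−y|^{2/p} on ℝ × ℝ is at most C‖u'‖_{L^1}). -/
open MeasureTheory ENNReal Set

noncomputable section

/-- The level set `E_λ^σ(u) = {(x,y) ∈ ℝ × ℝ : |u(x) - u(y)| ≥ λ |x - y|^σ}`. -/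
def lvlSet1 (u : ℝ → ℝ) (σ lam : ℝ) : Set (ℝ × ℝ) :=
  {z | lam * |z.1 - z.2| ^ σ ≤ |u z.1 - u z.2|}

/-- Vitali covering bound: the set of pairs `x < y` with
`κ (y-x)^2 ≤ ∫_{[x,y]} g` has measure at most `(25/κ) ∫ g`. -/
lemma vitali_sq (g : ℝ → ℝ) (hgi : Integrable g) (hg0 : ∀ x, 0 ≤ g x)
    (κ : ℝ) (hκ : 0 < κ) :
    volume {z : ℝ × ℝ | z.1 < z.2 ∧ κ * (z.2 - z.1) ^ 2 ≤ ∫ t in Set.Icc z.1 z.2, g t}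
      ≤ ENNReal.ofReal (25 / κ * ∫ x, g x) := by
  set I := ∫ x, g x with hIdef
  have hI0 : 0 ≤ I := integral_nonneg fun x => hg0 x
  set F : Set (ℝ × ℝ) :=
    {z : ℝ × ℝ | z.1 < z.2 ∧ κ * (z.2 - z.1) ^ 2 ≤ ∫ t in Set.Icc z.1 z.2, g t} with hF
  set B : ℝ × ℝ → Set ℝ := fun a => Set.Icc a.1 a.2 with hB
  set δ : ℝ × ℝ → ℝ := fun a => a.2 - a.1 with hδ
  have hsetle : ∀ a ∈ F, ∫ t in Set.Icc a.1 a.2, g t ≤ I :=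
    fun a _ => setIntegral_le_integral hgi (Filter.Eventually.of_forall fun t => hg0 t)
  have hδnn : ∀ a ∈ F, 0 ≤ δ a := fun a ha => by
    have := ha.1; simp only [hδ]; linarith
  have hδle : ∀ a ∈ F, δ a ≤ Real.sqrt (I / κ) := by
    intro a ha
    have h1 : κ * δ a ^ 2 ≤ I := le_trans ha.2 (hsetle a ha)
    have h2 : δ a ^ 2 ≤ I / κ := (le_div_iff₀' hκ).2 h1
    calc δ a = Real.sqrt (δ a ^ 2) := (Real.sqrt_sq (hδnn a ha)).symm
      _ ≤ Real.sqrt (I / κ) := Real.sqrt_le_sqrt h2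
  have hne : ∀ a ∈ F, (B a).Nonempty := fun a ha => Set.nonempty_Icc.2 ha.1.le
  obtain ⟨U, hUt, hUdisj, hUcov⟩ :=
    Vitali.exists_disjoint_subfamily_covering_enlargement B F δ 2 one_lt_two hδnn
      (Real.sqrt (I / κ)) hδle hne
  have hUc : U.Countable := by
    apply hUdisj.countable_of_nonempty_interior
    intro b hb
    have hb' : (hUt hb : b ∈ F).1 = (hUt hb).1 := rfl
    simp only [hB, interior_Icc]
    exact Set.nonempty_Ioo.2 (hUt hb).1
  set Q : ℝ × ℝ → Set (ℝ × ℝ) := fun b =>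
    Set.Icc (b.1 - 2 * (b.2 - b.1)) (b.2 + 2 * (b.2 - b.1)) ×ˢ
      Set.Icc (b.1 - 2 * (b.2 - b.1)) (b.2 + 2 * (b.2 - b.1)) with hQ
  have hcover : F ⊆ ⋃ b ∈ U, Q b := by
    intro a ha
    obtain ⟨b, hbU, ⟨w, hw⟩, hab⟩ := hUcov a ha
    obtain ⟨⟨hw1, hw2⟩, hw3, hw4⟩ := hw
    have hb1 : b.1 < b.2 := (hUt hbU).1
    have ha1 : a.1 < a.2 := ha.1
    simp only [hδ] at hab
    simp only [Set.mem_iUnion]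
    refine ⟨b, hbU, ?_⟩
    simp only [hQ, Set.mem_prod, Set.mem_Icc]
    refine ⟨⟨by linarith, by linarith⟩, ⟨by linarith, by linarith⟩⟩
  set μm : Measure ℝ := volume.withDensity (fun x => ENNReal.ofReal (g x)) with hμm
  have hμIcc : ∀ c d : ℝ, μm (Set.Icc c d) = ENNReal.ofReal (∫ t in Set.Icc c d, g t) := by
    intro c d
    rw [hμm, withDensity_apply _ measurableSet_Icc,
      ofReal_integral_eq_lintegral_ofReal hgi.integrableOn
        (Filter.Eventually.of_forall fun t => hg0 t)]
  have hμuniv : μm Set.univ = ENNReal.ofReal I := by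
    rw [hμm, withDensity_apply _ MeasurableSet.univ, Measure.restrict_univ,
      ofReal_integral_eq_lintegral_ofReal hgi (Filter.Eventually.of_forall fun t => hg0 t)]
  have hQvol : ∀ b ∈ U, volume (Q b) ≤ ENNReal.ofReal (25 / κ) * μm (Set.Icc b.1 b.2) := by
    intro b hbU
    have hb : b ∈ F := hUt hbU
    have hb1 : b.1 < b.2 := hb.1
    have hd0 : (0:ℝ) ≤ b.2 - b.1 := by linarith
    have h1 : volume (Q b) = ENNReal.ofReal (25 * (b.2 - b.1) ^ 2) := by
      rw [hQ]
      simp only [Measure.volume_eq_prod, Measure.prod_prod, Real.volume_Icc]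
      rw [← ENNReal.ofReal_mul (by linarith)]
      congr 1
      ring
    rw [h1, hμIcc]
    rw [← ENNReal.ofReal_mul (by positivity)]
    apply ENNReal.ofReal_le_ofReal
    have h2 : κ * (b.2 - b.1) ^ 2 ≤ ∫ t in Set.Icc b.1 b.2, g t := hb.2
    calc 25 * (b.2 - b.1) ^ 2 = 25 / κ * (κ * (b.2 - b.1) ^ 2) := by field_simp
      _ ≤ 25 / κ * ∫ t in Set.Icc b.1 b.2, g t := by
          apply mul_le_mul_of_nonneg_left h2 (by positivity)
  calc volume F ≤ volume (⋃ b ∈ U, Q b) := measure_mono hcover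
    _ ≤ ∑' b : U, volume (Q b) := measure_biUnion_le volume hUc Q
    _ ≤ ∑' b : U, ENNReal.ofReal (25 / κ) * μm (Set.Icc (b : ℝ × ℝ).1 (b : ℝ × ℝ).2) :=
        ENNReal.tsum_le_tsum fun b => hQvol b b.2
    _ = ENNReal.ofReal (25 / κ) * ∑' b : U, μm (Set.Icc (b : ℝ × ℝ).1 (b : ℝ × ℝ).2) :=
        ENNReal.tsum_mul_left
    _ = ENNReal.ofReal (25 / κ) * μm (⋃ b ∈ U, Set.Icc b.1 b.2) := by
        rw [measure_biUnion hUc hUdisj fun b _ => measurableSet_Icc]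
    _ ≤ ENNReal.ofReal (25 / κ) * μm Set.univ :=
        mul_le_mul_right (measure_mono (Set.subset_univ _)) _
    _ = ENNReal.ofReal (25 / κ) * ENNReal.ofReal I := by rw [hμuniv]
    _ = ENNReal.ofReal (25 / κ * I) := (ENNReal.ofReal_mul (by positivity)).symm

/-- There is an absolute constant `C` such that for every `1 ≤ p < ∞`,
`u ∈ C_c^∞(ℝ)` and `λ > 0`, one has `λ ℒ²(E_λ^{2/p}(u))^{1/p} ≤ C ‖u'‖_{L¹(ℝ)}`. -/
theorem stmt_3 : ∃ C : ℝ, 0 < C ∧ ∀ p : ℝ, 1 ≤ p → ∀ u : ℝ → ℝ,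
    ContDiff ℝ (⊤ : ℕ∞) u → HasCompactSupport u → ∀ lam : ℝ, 0 < lam →
    ENNReal.ofReal lam * volume (lvlSet1 u (2 / p) lam) ^ (1 / p) ≤
      ENNReal.ofReal (C * ∫ x : ℝ, |deriv u x|) := by
  have hdiag : volume {z : ℝ × ℝ | z.1 = z.2} = 0 := by
    have hm : MeasurableSet {z : ℝ × ℝ | z.1 = z.2} :=
      (isClosed_eq continuous_fst continuous_snd).measurableSet
    rw [Measure.volume_eq_prod, Measure.prod_apply hm]
    have hx : ∀ x : ℝ, (Prod.mk x ⁻¹' {z : ℝ × ℝ | z.1 = z.2}) = {x} := by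
      intro x; ext y; simp [eq_comm]
    simp [hx]
  refine ⟨50, by norm_num, ?_⟩
  intro p hp u hu hsupp lam hlam
  have hp0 : (0:ℝ) < p := lt_of_lt_of_le one_pos hp
  set g : ℝ → ℝ := fun x => |deriv u x| with hgdef
  have hg0 : ∀ x, 0 ≤ g x := fun x => abs_nonneg _
  have hderivc : Continuous (deriv u) := (hu.continuous_deriv (by simp))
  have hgi : Integrable g :=
    (hderivc.integrable_of_hasCompactSupport hsupp.deriv).abs
  set I : ℝ := ∫ x, g x with hIdef
  have hI0 : 0 ≤ I := integral_nonneg hg0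
  -- FTC bound
  have key : ∀ x y : ℝ, x ≤ y → |u y - u x| ≤ ∫ t in Set.Icc x y, g t := by
    intro x y hxy
    have h1 : ∫ t in x..y, deriv u t = u y - u x :=
      intervalIntegral.integral_deriv_eq_sub
        (fun t _ => (hu.differentiable (by simp)).differentiableAt)
        (hderivc.intervalIntegrable x y)
    rw [← h1]
    calc |∫ t in x..y, deriv u t| ≤ ∫ t in x..y, |deriv u t| :=
          intervalIntegral.abs_integral_le_integral_abs hxy
      _ = ∫ t in Set.Icc x y, g t := by
          rw [intervalIntegral.integral_of_le hxy, MeasureTheory.integral_Icc_eq_integral_Ioc]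
  by_cases hI : I = 0
  · -- degenerate case : u ≡ 0
    have hgz : ∀ x, g x = 0 := by
      have hae : g =ᵐ[volume] 0 :=
        (integral_eq_zero_iff_of_nonneg hg0 hgi).1 (by rw [← hIdef]; exact hI)
      have := (hderivc.abs.ae_eq_iff_eq volume continuous_const).1 hae
      intro x; exact congrFun this x
    have hderiv0 : ∀ x, deriv u x = 0 := fun x => abs_eq_zero.1 (hgz x)
    have hconst : ∀ x y : ℝ, u x = u y := fun x y =>
      is_const_of_deriv_eq_zero (hu.differentiable (by simp)) hderiv0 x y
    obtain ⟨x₀, hx₀⟩ : ∃ x, x ∉ tsupport u := by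
      by_contra h
      push_neg at h
      have : tsupport u = Set.univ := Set.eq_univ_of_forall h
      exact (IsCompact.ne_univ hsupp) this
    have hu0 : ∀ y, u y = 0 := fun y => (hconst y x₀).trans (image_eq_zero_of_notMem_tsupport hx₀)
    have hsubdiag : lvlSet1 u (2 / p) lam ⊆ {z : ℝ × ℝ | z.1 = z.2} := by
      intro z hz
      simp only [lvlSet1, Set.mem_setOf_eq, hu0, sub_zero, abs_zero] at hz
      have h1 : |z.1 - z.2| ^ (2 / p) ≤ 0 := by
        nlinarith [Real.rpow_nonneg (abs_nonneg (z.1 - z.2)) (2 / p)]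
      have h2 : |z.1 - z.2| ^ (2 / p) = 0 :=
        le_antisymm h1 (Real.rpow_nonneg (abs_nonneg _) _)
      have h3 : |z.1 - z.2| = 0 := by
        by_contra h3
        have : (0:ℝ) < |z.1 - z.2| := lt_of_le_of_ne (abs_nonneg _) (Ne.symm h3)
        exact absurd h2 (ne_of_gt (Real.rpow_pos_of_pos this _))
      have : z.1 - z.2 = 0 := abs_eq_zero.1 h3
      simpa [Set.mem_setOf_eq] using by linarith
    have hv0 : volume (lvlSet1 u (2 / p) lam) = 0 :=
      le_antisymm (hdiag ▸ measure_mono hsubdiag) zero_le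
    rw [hv0, ENNReal.zero_rpow_of_pos (by positivity), mul_zero]
    exact zero_le
  · have hIpos : 0 < I := lt_of_le_of_ne hI0 (Ne.symm hI)
    set κ : ℝ := lam ^ p * I ^ (1 - p) with hκdef
    have hκ : 0 < κ := mul_pos (Real.rpow_pos_of_pos hlam _) (Real.rpow_pos_of_pos hIpos _)
    set F : Set (ℝ × ℝ) :=
      {z : ℝ × ℝ | z.1 < z.2 ∧ κ * (z.2 - z.1) ^ 2 ≤ ∫ t in Set.Icc z.1 z.2, g t} with hF
    -- the main pointwise claim
    have claim : ∀ x y : ℝ, x < y → lam * |x - y| ^ (2 / p) ≤ |u x - u y| →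
        κ * (y - x) ^ 2 ≤ ∫ t in Set.Icc x y, g t := by
      intro x y hxy hle
      set s : ℝ := y - x with hs
      have hs0 : 0 < s := by simp only [hs]; linarith
      have habs : |x - y| = s := by rw [abs_sub_comm, abs_of_pos hs0]
      set A : ℝ := lam * s ^ (2 / p) with hA
      have hA0 : 0 < A := mul_pos hlam (Real.rpow_pos_of_pos hs0 _)
      have hm : A ≤ ∫ t in Set.Icc x y, g t := by
        calc A = lam * |x - y| ^ (2 / p) := by rw [habs]
          _ ≤ |u x - u y| := hle
          _ = |u y - u x| := abs_sub_comm _ _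
          _ ≤ ∫ t in Set.Icc x y, g t := key x y hxy.le
      have hAI : A ≤ I :=
        hm.trans (setIntegral_le_integral hgi (Filter.Eventually.of_forall hg0))
      have e0 : (s : ℝ) ^ (2:ℝ) = s ^ 2 := by
        rw [show ((2:ℝ)) = ((2:ℕ):ℝ) by norm_num, Real.rpow_natCast]
      have hsp : ((s : ℝ) ^ ((2:ℝ) / p)) ^ p = s ^ 2 := by
        rw [← Real.rpow_mul hs0.le, div_mul_cancel₀ _ (ne_of_gt hp0), e0]
      have e1 : κ * s ^ 2 = A ^ p * I ^ (1 - p) := by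
        rw [hA, Real.mul_rpow hlam.le (Real.rpow_nonneg hs0.le _), hsp, hκdef]
        ring
      have e2 : A ^ p * I ^ (1 - p) ≤ A := by
        have he : A ^ p * I ^ (1 - p) = A * (A / I) ^ (p - 1) := by
          rw [Real.div_rpow hA0.le hIpos.le, show (1 - p) = -(p - 1) by ring,
            Real.rpow_neg hIpos.le, show (p : ℝ) = 1 + (p - 1) by ring]
          rw [Real.rpow_add hA0, Real.rpow_one]
          ring_nf
        rw [he]
        have h1 : (A / I) ^ (p - 1) ≤ 1 :=
          Real.rpow_le_one (div_nonneg hA0.le hIpos.le) ((div_le_one hIpos).2 hAI)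
            (by linarith)
        calc A * (A / I) ^ (p - 1) ≤ A * 1 := mul_le_mul_of_nonneg_left h1 hA0.le
          _ = A := mul_one A
      calc κ * (y - x) ^ 2 = κ * s ^ 2 := by rw [hs]
        _ = A ^ p * I ^ (1 - p) := e1
        _ ≤ A := e2
        _ ≤ ∫ t in Set.Icc x y, g t := hm
    -- inclusion into diagonal ∪ F ∪ swap⁻¹ F
    have hsub : lvlSet1 u (2 / p) lam ⊆
        ({z : ℝ × ℝ | z.1 = z.2} ∪ F) ∪ (Prod.swap ⁻¹' F) := by
      intro z hz
      rcases lt_trichotomy z.1 z.2 with h | h | h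
      · exact Or.inl (Or.inr ⟨h, claim z.1 z.2 h hz⟩)
      · exact Or.inl (Or.inl h)
      · refine Or.inr ?_
        have hz' : lam * |z.2 - z.1| ^ (2 / p) ≤ |u z.2 - u z.1| := by
          rw [abs_sub_comm, abs_sub_comm (u z.2)]
          exact hz
        exact ⟨h, claim z.2 z.1 h hz'⟩
    -- measurability of F, for the swap
    set G : ℝ → ℝ := fun x => ∫ t in Set.Iic x, g t with hG
    have key2 : ∀ a b : ℝ, a ≤ b → G b = G a + ∫ t in Set.Ioc a b, g t := by
      intro a b hab
      rw [hG]
      simp only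
      rw [← Set.Iic_union_Ioc_eq_Iic hab,
        setIntegral_union (Set.Iic_disjoint_Ioc le_rfl) measurableSet_Ioc
          hgi.integrableOn hgi.integrableOn]
    have hGmono : Monotone G := by
      intro a b hab
      have := key2 a b hab
      have h2 : 0 ≤ ∫ t in Set.Ioc a b, g t :=
        setIntegral_nonneg measurableSet_Ioc fun t _ => hg0 t
      linarith
    have hIccG : ∀ a b : ℝ, a ≤ b → ∫ t in Set.Icc a b, g t = G b - G a := by
      intro a b hab
      rw [MeasureTheory.integral_Icc_eq_integral_Ioc, key2 a b hab]
      ring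
    have hFmeas : MeasurableSet F := by
      have hFeq : F = {z : ℝ × ℝ | z.1 < z.2} ∩
          {z : ℝ × ℝ | κ * (z.2 - z.1) ^ 2 ≤ G z.2 - G z.1} := by
        ext z
        simp only [hF, Set.mem_setOf_eq, Set.mem_inter_iff]
        constructor
        · rintro ⟨h1, h2⟩
          exact ⟨h1, by rwa [hIccG _ _ h1.le] at h2⟩
        · rintro ⟨h1, h2⟩
          exact ⟨h1, by rwa [hIccG _ _ h1.le]⟩
      rw [hFeq]
      refine (measurableSet_lt measurable_fst measurable_snd).inter ?_
      exact measurableSet_le (by fun_prop)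
        ((hGmono.measurable.comp measurable_snd).sub (hGmono.measurable.comp measurable_fst))
    have hswap : volume (Prod.swap ⁻¹' F) = volume F := by
      have hmp : MeasurePreserving (Prod.swap : ℝ × ℝ → ℝ × ℝ) volume volume := by
        rw [Measure.volume_eq_prod]
        exact Measure.measurePreserving_swap
      exact hmp.measure_preimage hFmeas.nullMeasurableSet
    -- volume bound
    have hFvol : volume F ≤ ENNReal.ofReal (25 / κ * I) := vitali_sq g hgi hg0 κ hκ
    have hκI : 25 / κ * I = 25 * I ^ p / lam ^ p := by
      have hII : I / I ^ ((1:ℝ) - p) = I ^ p := by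
        rw [Real.rpow_sub hIpos, Real.rpow_one]
        field_simp
      rw [hκdef, show (25:ℝ) / (lam ^ p * I ^ (1 - p)) * I
            = 25 * (I / I ^ (1 - p)) / lam ^ p by ring, hII]
    have hvol : volume (lvlSet1 u (2 / p) lam) ≤ ENNReal.ofReal (50 * I ^ p / lam ^ p) := by
      calc volume (lvlSet1 u (2 / p) lam)
          ≤ volume (({z : ℝ × ℝ | z.1 = z.2} ∪ F) ∪ (Prod.swap ⁻¹' F)) := measure_mono hsub
        _ ≤ volume ({z : ℝ × ℝ | z.1 = z.2} ∪ F) + volume (Prod.swap ⁻¹' F) :=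
            measure_union_le _ _
        _ ≤ (volume {z : ℝ × ℝ | z.1 = z.2} + volume F) + volume (Prod.swap ⁻¹' F) :=
            add_le_add_left (measure_union_le _ _) _
        _ = volume F + volume F := by rw [hdiag, hswap, zero_add]
        _ ≤ ENNReal.ofReal (25 / κ * I) + ENNReal.ofReal (25 / κ * I) :=
            add_le_add hFvol hFvol
        _ = ENNReal.ofReal (50 * I ^ p / lam ^ p) := by
            rw [← ENNReal.ofReal_add (by positivity) (by positivity), hκI]
            ring_nf
    -- final computation
    have hrpow : ENNReal.ofReal lam * volume (lvlSet1 u (2 / p) lam) ^ ((1:ℝ) / p) ≤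
        ENNReal.ofReal lam * ENNReal.ofReal ((50 * I ^ p / lam ^ p) ^ ((1:ℝ) / p)) := by
      refine mul_le_mul_right ?_ _
      rw [← ENNReal.ofReal_rpow_of_nonneg (by positivity) (by positivity)]
      exact ENNReal.rpow_le_rpow hvol (by positivity)
    refine hrpow.trans ?_
    rw [← ENNReal.ofReal_mul hlam.le]
    apply ENNReal.ofReal_le_ofReal
    have hcomp : (50 * I ^ p / lam ^ p) ^ ((1:ℝ) / p) = 50 ^ ((1:ℝ)/p) * I / lam := by
      rw [Real.div_rpow (by positivity) (by positivity),
        Real.mul_rpow (by norm_num) (Real.rpow_nonneg hI0 _),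
        ← Real.rpow_mul hI0, ← Real.rpow_mul hlam.le,
        mul_one_div_cancel (ne_of_gt hp0), Real.rpow_one, Real.rpow_one]
    rw [hcomp]
    have h50 : (50:ℝ) ^ ((1:ℝ)/p) ≤ 50 := by
      calc (50:ℝ) ^ ((1:ℝ)/p) ≤ 50 ^ (1:ℝ) :=
          Real.rpow_le_rpow_of_exponent_le (by norm_num)
            (by rw [div_le_one hp0]; linarith)
        _ = 50 := Real.rpow_one 50
    calc lam * (50 ^ ((1:ℝ)/p) * I / lam) = 50 ^ ((1:ℝ)/p) * I := by
          field_simp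
      _ ≤ 50 * I := mul_le_mul_of_nonneg_right h50 hI0
end
end

section
/- There exists a constant C = C(N) such that for every u ∈ C_c^∞(ℝ^N), every δ > 0 and every r > 0, ∬_{{(x,y) ∈ ℝ^N×ℝ^N : |x−y| ≤ r}} |u(x) − u(y)| / |x−y|^{N+1−δ} dy dx ≤ C · (r^δ/δ) · ∫_{ℝ^N} |∇u(x)| dx. -/
open MeasureTheory ENNReal

set_option maxHeartbeats 2000000
noncomputable section

/-- `ℝ^N` as a Euclidean space. -/
abbrev Euc (N : ℕ) := EuclideanSpace ℝ (Fin N)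

open Set Metric in
private lemma lintegral_fun_norm_addHaar' {E : Type*} [NormedAddCommGroup E] [NormedSpace ℝ E]
    [MeasurableSpace E] [BorelSpace E] [FiniteDimensional ℝ E] [Nontrivial E]
    (μ : Measure E) [μ.IsAddHaarMeasure] (g : ℝ → ℝ≥0∞) (hg : Measurable g) :
    ∫⁻ x, g ‖x‖ ∂μ = (Module.finrank ℝ E) * μ (ball 0 1) *
      ∫⁻ y in Ioi (0:ℝ), ENNReal.ofReal (y ^ (Module.finrank ℝ E - 1)) * g y := by
  have h0 : ∫⁻ x, g ‖x‖ ∂μ = ∫⁻ x in ({0}ᶜ : Set E), g ‖x‖ ∂μ := by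
    rw [← lintegral_add_compl (fun x => g ‖x‖) (measurableSet_singleton (0:E))]
    rw [setLIntegral_measure_zero _ _ (measure_singleton 0), zero_add]
  rw [h0]
  have h1 : ∫⁻ x in ({0}ᶜ : Set E), g ‖x‖ ∂μ
      = ∫⁻ x : ({0}ᶜ : Set E), g ‖x.1‖ ∂(μ.comap Subtype.val) := by
    have := (setLIntegral_subtype (μ := μ) (measurableSet_singleton (0:E)).compl univ
      (fun x => g ‖x‖)).symm
    rwa [image_univ, Subtype.range_coe, Measure.restrict_univ] at this
  rw [h1]
  have h2 := (μ.measurePreserving_homeomorphUnitSphereProd).map_eq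
  have hgm : Measurable fun p : (sphere (0:E) 1) × (Ioi (0:ℝ)) => g p.2.1 :=
    (hg.comp measurable_subtype_coe).comp measurable_snd
  have h3 : ∫⁻ x : ({0}ᶜ : Set E), g ‖x.1‖ ∂(μ.comap Subtype.val)
      = ∫⁻ p : (sphere (0:E) 1) × (Ioi (0:ℝ)), g p.2.1
          ∂(μ.toSphere.prod (Measure.volumeIoiPow (Module.finrank ℝ E - 1))) := by
    rw [← h2, lintegral_map hgm (Homeomorph.measurable _)]
    congr 1
    funext x; simp
  rw [h3, lintegral_prod _ hgm.aemeasurable]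
  simp only [lintegral_const, Measure.toSphere_apply_univ]
  have h4 : ∫⁻ y : (Ioi (0:ℝ)), g y.1 ∂(Measure.volumeIoiPow (Module.finrank ℝ E - 1))
      = ∫⁻ y in Ioi (0:ℝ), ENNReal.ofReal (y ^ (Module.finrank ℝ E - 1)) * g y := by
    rw [Measure.volumeIoiPow, lintegral_withDensity_eq_lintegral_mul _
      ((measurable_subtype_coe.pow_const _).ennreal_ofReal)
      (show Measurable fun y : (Ioi (0:ℝ)) => g y.1 from hg.comp measurable_subtype_coe)]
    simp only [Pi.mul_apply]
    have := (setLIntegral_subtype (μ := (volume : Measure ℝ)) (measurableSet_Ioi (a := (0:ℝ)))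
      univ (fun y : ℝ => ENNReal.ofReal (y ^ (Module.finrank ℝ E - 1)) * g y)).symm
    rw [image_univ, Subtype.range_coe, Measure.restrict_univ] at this
    exact this.symm
  rw [h4]
  ring

open Set Metric in
private lemma ftc_bound' {N : ℕ} (u : Euc N → ℝ) (hu : ContDiff ℝ (⊤ : ℕ∞) u) (x v : Euc N) :
    |u (x + v) - u x| ≤ ‖v‖ * ∫ t in Ioc (0:ℝ) 1, ‖fderiv ℝ u (x + t • v)‖ := by
  have hline : Continuous fun t : ℝ => x + t • v := by continuity
  have hfc : Continuous (fderiv ℝ u) := hu.continuous_fderiv (by simp)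
  have hcont : Continuous fun t : ℝ => (fderiv ℝ u (x + t • v)) v :=
    (hfc.comp hline).clm_apply continuous_const
  have hd : ∀ t ∈ uIcc (0:ℝ) 1, HasDerivAt (fun t : ℝ => u (x + t • v))
      ((fderiv ℝ u (x + t • v)) v) t := by
    intro t _
    have h1 : HasFDerivAt u (fderiv ℝ u (x + t • v)) (x + t • v) :=
      (hu.differentiable (by simp) (x + t • v)).hasFDerivAt
    have h2 : HasDerivAt (fun t : ℝ => x + t • v) v t := by
      simpa using ((hasDerivAt_id t).smul_const v).const_add x
    exact h1.comp_hasDerivAt t h2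
  have heq := intervalIntegral.integral_eq_sub_of_hasDerivAt hd (hcont.intervalIntegrable 0 1)
  simp only [one_smul, zero_smul, add_zero] at heq
  have h3 : |u (x + v) - u x| ≤ ∫ t in (0:ℝ)..1, |(fderiv ℝ u (x + t • v)) v| := by
    rw [← heq]
    simpa [Real.norm_eq_abs] using
      intervalIntegral.norm_integral_le_integral_norm (μ := volume)
        (f := fun t : ℝ => (fderiv ℝ u (x + t • v)) v) zero_le_one
  have h4 : (∫ t in (0:ℝ)..1, |(fderiv ℝ u (x + t • v)) v|)
      ≤ ∫ t in (0:ℝ)..1, ‖v‖ * ‖fderiv ℝ u (x + t • v)‖ := by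
    apply intervalIntegral.integral_mono_on zero_le_one
    · exact hcont.abs.intervalIntegrable 0 1
    · exact (((continuous_const.mul ((hfc.comp hline).norm :
        Continuous fun t : ℝ => ‖fderiv ℝ u (x + t • v)‖)) :
        Continuous fun t : ℝ => ‖v‖ * ‖fderiv ℝ u (x + t • v)‖).intervalIntegrable 0 1)
    · intro t _
      calc |(fderiv ℝ u (x + t • v)) v| ≤ ‖fderiv ℝ u (x + t • v)‖ * ‖v‖ :=
        (fderiv ℝ u (x + t • v)).le_opNorm v
      _ = ‖v‖ * ‖fderiv ℝ u (x + t • v)‖ := mul_comm _ _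
  calc |u (x + v) - u x| ≤ ∫ t in (0:ℝ)..1, ‖v‖ * ‖fderiv ℝ u (x + t • v)‖ := h3.trans h4
    _ = ‖v‖ * ∫ t in Ioc (0:ℝ) 1, ‖fderiv ℝ u (x + t • v)‖ := by
        rw [intervalIntegral.integral_of_le zero_le_one, MeasureTheory.integral_const_mul]

open Set Metric in
private lemma J_eq' {N : ℕ} (hN : N ≠ 0) (δ r : ℝ) (hδ : 0 < δ) (hr : 0 < r) :
    ∫⁻ h in {h : Euc N | ‖h‖ ≤ r}, ENNReal.ofReal (‖h‖ ^ (δ - N)) =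
      (N : ℝ≥0∞) * volume (ball (0 : Euc N) 1) * ENNReal.ofReal (r ^ δ / δ) := by
  haveI : Nonempty (Fin N) := ⟨⟨0, Nat.pos_of_ne_zero hN⟩⟩
  set g : ℝ → ℝ≥0∞ := fun y => (Iic r).indicator (fun y => ENNReal.ofReal (y ^ (δ - N))) y
    with hg_def
  have hgm : Measurable g := by
    apply Measurable.indicator _ measurableSet_Iic
    measurability
  have hset : MeasurableSet {h : Euc N | ‖h‖ ≤ r} :=
    (isClosed_le continuous_norm continuous_const).measurableSet
  have h1 : ∫⁻ h in {h : Euc N | ‖h‖ ≤ r}, ENNReal.ofReal (‖h‖ ^ (δ - N))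
      = ∫⁻ h : Euc N, g ‖h‖ := by
    rw [← lintegral_indicator hset]
    refine lintegral_congr fun h => ?_
    simp only [hg_def, indicator_apply, mem_setOf_eq, mem_Iic]
  rw [h1, lintegral_fun_norm_addHaar' volume g hgm]
  have hdim : Module.finrank ℝ (Euc N) = N := finrank_euclideanSpace_fin
  rw [hdim]
  congr 1
  have h2 : ∀ y ∈ Ioi (0:ℝ), ENNReal.ofReal (y ^ (N - 1)) * g y
      = (Ioc 0 r).indicator (fun y => ENNReal.ofReal (y ^ (δ - 1))) y := by
    intro y hy
    have hy' : (0:ℝ) < y := hy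
    by_cases hh : y ≤ r
    · rw [hg_def]
      simp only [indicator_of_mem (mem_Iic.2 hh), indicator_of_mem (mem_Ioc.2 ⟨hy', hh⟩)]
      rw [← Real.rpow_natCast y (N - 1), ← ENNReal.ofReal_mul (Real.rpow_nonneg hy'.le _),
        ← Real.rpow_add hy']
      congr 2
      have h1N : 1 ≤ N := Nat.one_le_iff_ne_zero.2 hN
      push_cast [Nat.cast_sub h1N]
      ring
    · rw [hg_def]
      simp only [indicator_of_notMem (fun h => hh (mem_Iic.1 h)),
        indicator_of_notMem (fun h => hh (mem_Ioc.1 h).2), mul_zero]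
  rw [setLIntegral_congr_fun measurableSet_Ioi h2,
    lintegral_indicator measurableSet_Ioc, Measure.restrict_restrict measurableSet_Ioc,
    inter_eq_self_of_subset_left Ioc_subset_Ioi_self]
  have hint : IntegrableOn (fun y : ℝ => y ^ (δ - 1)) (Ioc 0 r) :=
    (intervalIntegral.intervalIntegrable_rpow' (by linarith)).1
  rw [← ofReal_integral_eq_lintegral_ofReal hint ?_]
  · congr 1
    rw [← intervalIntegral.integral_of_le hr.le, integral_rpow (Or.inl (by linarith))]
    rw [sub_add_cancel, Real.zero_rpow hδ.ne', sub_zero]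
  · filter_upwards [ae_restrict_mem measurableSet_Ioc] with y hy
    exact Real.rpow_nonneg hy.1.le _

open Set Metric in
/-- There is `C = C(N)` such that for every `u ∈ C_c^∞(ℝ^N)`, `δ > 0` and `r > 0`,
`∬_{|x-y| ≤ r} |u(x)-u(y)|/|x-y|^{N+1-δ} dy dx ≤ C (r^δ/δ) ∫ |∇u|`. -/
theorem stmt_10 (N : ℕ) : ∃ C : ℝ, 0 < C ∧ ∀ u : Euc N → ℝ, ContDiff ℝ (⊤ : ℕ∞) u →
    HasCompactSupport u → ∀ δ r : ℝ, 0 < δ → 0 < r →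
    (∫⁻ z in {z : Euc N × Euc N | ‖z.1 - z.2‖ ≤ r},
        ENNReal.ofReal (|u z.1 - u z.2| / ‖z.1 - z.2‖ ^ ((N : ℝ) + 1 - δ))) ≤
      ENNReal.ofReal (C * (r ^ δ / δ) * ∫ x, ‖fderiv ℝ u x‖) := by
  set C : ℝ := (N : ℝ) * (volume (ball (0:Euc N) 1)).toReal + 1 with hC
  have hCpos : 0 < C := by positivity
  refine ⟨C, hCpos, ?_⟩
  intro u hu hsupp δ r hδ hr
  have hSm : MeasurableSet {z : Euc N × Euc N | ‖z.1 - z.2‖ ≤ r} :=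
    (isClosed_le (continuous_fst.sub continuous_snd).norm continuous_const).measurableSet
  set F : Euc N × Euc N → ℝ≥0∞ :=
    fun z => ENNReal.ofReal (|u z.1 - u z.2| / ‖z.1 - z.2‖ ^ ((N:ℝ) + 1 - δ)) with hFdef
  by_cases hN : N = 0
  · subst hN
    have hz : ∀ z : Euc 0 × Euc 0, F z = 0 := by
      intro z
      have hz12 : z.1 = z.2 := Subsingleton.elim _ _
      simp [hFdef, hz12]
    have : ∫⁻ z in {z : Euc 0 × Euc 0 | ‖z.1 - z.2‖ ≤ r}, F z = 0 := by
      simp [funext hz]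
    exact this.le.trans bot_le
  -- main case
  haveI : Nonempty (Fin N) := ⟨⟨0, Nat.pos_of_ne_zero hN⟩⟩
  set g : Euc N → ℝ := fun x => ‖fderiv ℝ u x‖ with hgdef
  have hgc : Continuous g := (hu.continuous_fderiv (by simp)).norm
  have hgint : Integrable g := hgc.integrable_of_hasCompactSupport (hsupp.fderiv ℝ).norm
  set G : Euc N → ℝ≥0∞ := fun x => ENNReal.ofReal (g x) with hGdef
  have hGc : Continuous G := ENNReal.continuous_ofReal.comp hgc
  set I := ∫⁻ x, G x with hIdef
  have hIeq : I = ENNReal.ofReal (∫ x, g x) :=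
    (ofReal_integral_eq_lintegral_ofReal hgint (ae_of_all _ fun x => norm_nonneg _)).symm
  set K : Euc N → ℝ≥0∞ :=
    fun h => ({h : Euc N | ‖h‖ ≤ r}).indicator (fun h => ENNReal.ofReal (‖h‖ ^ (δ - (N:ℝ)))) h
    with hKdef
  set L : Euc N → Euc N → ℝ≥0∞ := fun x h => ∫⁻ t in Ioc (0:ℝ) 1, G (x + t • h) with hLdef
  have hKset : MeasurableSet {h : Euc N | ‖h‖ ≤ r} :=
    (isClosed_le continuous_norm continuous_const).measurableSet
  have hrpm2 : Measurable fun y : ℝ => y ^ (δ - (N:ℝ)) := by measurability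
  have hKm : Measurable K := by
    apply Measurable.indicator _ hKset
    exact (hrpm2.comp continuous_norm.measurable).ennreal_ofReal
  have hrpm : Measurable fun y : ℝ => y ^ ((N:ℝ) + 1 - δ) := by measurability
  have hFm : Measurable F := by
    apply Measurable.ennreal_ofReal
    apply Measurable.div
    · exact ((hu.continuous.comp continuous_fst).sub
        (hu.continuous.comp continuous_snd)).abs.measurable
    · exact hrpm.comp (continuous_fst.sub continuous_snd).norm.measurable
  have hGinner : ∀ h : Euc N, Measurable (Function.uncurry fun (x : Euc N) (t : ℝ) => G (x + t • h)) := by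
    intro h
    apply Continuous.measurable
    exact hGc.comp ((continuous_fst.add (continuous_snd.smul continuous_const) :
      Continuous fun q : Euc N × ℝ => q.1 + q.2 • h))
  have hLm : Measurable fun p : Euc N × Euc N => L p.1 p.2 := by
    apply Measurable.lintegral_prod_right (f := fun (p : Euc N × Euc N) (t : ℝ) => G (p.1 + t • p.2))
    apply Continuous.measurable
    exact hGc.comp (((continuous_fst.comp continuous_fst).add
      (continuous_snd.smul (continuous_snd.comp continuous_fst)) :
      Continuous fun q : (Euc N × Euc N) × ℝ => q.1.1 + q.2 • q.1.2))
  -- pointwise bound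
  have hpoint : ∀ x h : Euc N,
      ({z : Euc N × Euc N | ‖z.1 - z.2‖ ≤ r}).indicator F (x, x + h) ≤ K h * L x h := by
    intro x h
    have hnorm_eq : ‖x - (x + h)‖ = ‖h‖ := by
      rw [sub_add_cancel_left, norm_neg]
    by_cases hmem : ‖h‖ ≤ r
    · rw [indicator_of_mem (show (x, x + h) ∈ {z : Euc N × Euc N | ‖z.1 - z.2‖ ≤ r} by
        simpa [mem_setOf_eq, hnorm_eq] using hmem), hKdef]
      beta_reduce
      rw [indicator_of_mem (show h ∈ {h : Euc N | ‖h‖ ≤ r} from hmem)]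
      by_cases h0 : h = 0
      · subst h0
        rw [hFdef]
        simp
      · have hpos : 0 < ‖h‖ := norm_pos_iff.2 h0
        set A := ∫ t in Ioc (0:ℝ) 1, g (x + t • h) with hA
        have hA0 : 0 ≤ A := integral_nonneg fun t => norm_nonneg _
        have hub : |u x - u (x + h)| ≤ ‖h‖ * A := by
          rw [abs_sub_comm]; exact ftc_bound' u hu x h
        have hdiv : |u x - u (x + h)| / ‖x - (x + h)‖ ^ ((N:ℝ) + 1 - δ)
            ≤ ‖h‖ ^ (δ - (N:ℝ)) * A := by
          rw [hnorm_eq]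
          have hden : 0 < ‖h‖ ^ ((N:ℝ) + 1 - δ) := Real.rpow_pos_of_pos hpos _
          rw [div_le_iff₀ hden]
          have hmulnorm : ‖h‖ ^ (δ - (N:ℝ)) * ‖h‖ ^ ((N:ℝ) + 1 - δ) = ‖h‖ := by
            rw [← Real.rpow_add hpos, show δ - (N:ℝ) + ((N:ℝ) + 1 - δ) = 1 by ring,
              Real.rpow_one]
          calc |u x - u (x + h)| ≤ ‖h‖ * A := hub
            _ = ‖h‖ ^ (δ - (N:ℝ)) * A * ‖h‖ ^ ((N:ℝ) + 1 - δ) := by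
                rw [mul_right_comm, hmulnorm]
        have hintg : IntegrableOn (fun t : ℝ => g (x + t • h)) (Ioc 0 1) :=
          ((hgc.comp ((continuous_const.add (continuous_id.smul continuous_const)) : Continuous fun t : ℝ => x + t • h)).integrableOn_Icc).mono_set Ioc_subset_Icc_self
        have hLA : ENNReal.ofReal A = L x h :=
          ofReal_integral_eq_lintegral_ofReal hintg (ae_of_all _ fun t => norm_nonneg _)
        calc F (x, x + h) ≤ ENNReal.ofReal (‖h‖ ^ (δ - (N:ℝ)) * A) :=
            ENNReal.ofReal_le_ofReal hdiv
          _ = ENNReal.ofReal (‖h‖ ^ (δ - (N:ℝ))) * ENNReal.ofReal A :=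
            ENNReal.ofReal_mul (Real.rpow_nonneg hpos.le _)
          _ = ENNReal.ofReal (‖h‖ ^ (δ - (N:ℝ))) * L x h := by rw [hLA]
    · rw [indicator_of_notMem (show (x, x + h) ∉ {z : Euc N × Euc N | ‖z.1 - z.2‖ ≤ r} by
        simpa [mem_setOf_eq, hnorm_eq] using hmem), hKdef]
      beta_reduce
      rw [indicator_of_notMem (show h ∉ {h : Euc N | ‖h‖ ≤ r} from hmem), zero_mul]
  -- step 1 : Tonelli
  have step1 : ∫⁻ z in {z : Euc N × Euc N | ‖z.1 - z.2‖ ≤ r}, F z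
      = ∫⁻ x, ∫⁻ y, ({z : Euc N × Euc N | ‖z.1 - z.2‖ ≤ r}).indicator F (x, y) := by
    rw [← lintegral_indicator hSm, Measure.volume_eq_prod,
      lintegral_prod _ ((hFm.indicator hSm).aemeasurable)]
  have step2 : ∀ x : Euc N,
      (∫⁻ y, ({z : Euc N × Euc N | ‖z.1 - z.2‖ ≤ r}).indicator F (x, y))
        ≤ ∫⁻ h, K h * L x h := by
    intro x
    calc (∫⁻ y, ({z : Euc N × Euc N | ‖z.1 - z.2‖ ≤ r}).indicator F (x, y))
        = ∫⁻ h, ({z : Euc N × Euc N | ‖z.1 - z.2‖ ≤ r}).indicator F (x, x + h) :=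
          (lintegral_add_left_eq_self
            (fun y => ({z : Euc N × Euc N | ‖z.1 - z.2‖ ≤ r}).indicator F (x, y)) x).symm
      _ ≤ ∫⁻ h, K h * L x h := lintegral_mono fun h => hpoint x h
  have hswapm : Measurable fun p : Euc N × Euc N => K p.2 * L p.1 p.2 :=
    (hKm.comp measurable_snd).mul hLm
  have step3 : ∫⁻ x, ∫⁻ h, K h * L x h = ∫⁻ h, ∫⁻ x, K h * L x h :=
    lintegral_lintegral_swap hswapm.aemeasurable
  have step4 : ∀ h : Euc N, ∫⁻ x, K h * L x h = K h * I := by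
    intro h
    rw [lintegral_const_mul _ (by
      apply Measurable.lintegral_prod_right (f := fun (x : Euc N) (t : ℝ) => G (x + t • h))
      exact hGinner h)]
    congr 1
    have hswap2 : ∫⁻ x, L x h = ∫⁻ t in Ioc (0:ℝ) 1, ∫⁻ x, G (x + t • h) :=
      lintegral_lintegral_swap (hGinner h).aemeasurable
    rw [hswap2]
    have : ∀ t : ℝ, (∫⁻ x, G (x + t • h)) = I := by
      intro t
      calc (∫⁻ x, G (x + t • h)) = ∫⁻ x, G (t • h + x) :=
          lintegral_congr fun x => by rw [add_comm]
        _ = I := lintegral_add_left_eq_self G (t • h)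
    rw [lintegral_congr fun t => this t, setLIntegral_const, Real.volume_Ioc]
    simp
  have step5 : ∫⁻ h, K h * I = (∫⁻ h, K h) * I := lintegral_mul_const I hKm
  have step6 : ∫⁻ h, K h = (N : ℝ≥0∞) * volume (ball (0 : Euc N) 1)
      * ENNReal.ofReal (r ^ δ / δ) := by
    rw [hKdef, lintegral_indicator hKset]
    exact J_eq' hN δ r hδ hr
  -- final comparison
  have hωfin : volume (ball (0 : Euc N) 1) ≠ ∞ := measure_ball_lt_top.ne
  have h5 : (N : ℝ≥0∞) * volume (ball (0 : Euc N) 1) ≤ ENNReal.ofReal C := by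
    have heq : (N : ℝ≥0∞) * volume (ball (0 : Euc N) 1)
        = ENNReal.ofReal ((N : ℝ) * (volume (ball (0 : Euc N) 1)).toReal) := by
      rw [ENNReal.ofReal_mul (Nat.cast_nonneg N), ENNReal.ofReal_natCast,
        ENNReal.ofReal_toReal hωfin]
    rw [heq]
    apply ENNReal.ofReal_le_ofReal
    rw [hC]; linarith
  have hrδ : 0 ≤ r ^ δ / δ := div_nonneg (Real.rpow_nonneg hr.le _) hδ.le
  calc ∫⁻ z in {z : Euc N × Euc N | ‖z.1 - z.2‖ ≤ r}, F z
      = ∫⁻ x, ∫⁻ y, ({z : Euc N × Euc N | ‖z.1 - z.2‖ ≤ r}).indicator F (x, y) := step1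
    _ ≤ ∫⁻ x, ∫⁻ h, K h * L x h := lintegral_mono step2
    _ = ∫⁻ h, ∫⁻ x, K h * L x h := step3
    _ = ∫⁻ h, K h * I := lintegral_congr step4
    _ = (∫⁻ h, K h) * I := step5
    _ = (N : ℝ≥0∞) * volume (ball (0 : Euc N) 1) * ENNReal.ofReal (r ^ δ / δ) * I := by
        rw [step6]
    _ ≤ ENNReal.ofReal C * ENNReal.ofReal (r ^ δ / δ) * ENNReal.ofReal (∫ x, g x) := by
        rw [hIeq]
        exact mul_le_mul' (mul_le_mul' h5 le_rfl) le_rfl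
    _ = ENNReal.ofReal (C * (r ^ δ / δ) * ∫ x, g x) := by
        rw [← ENNReal.ofReal_mul hCpos.le, ← ENNReal.ofReal_mul (mul_nonneg hCpos.le hrδ)]
end
end

section
/- Let N ≥ 1, 1 ≤ p < ∞, λ > 0, and let u : ℝ^N → ℝ be measurable. Then ∬_{ℝ^N×ℝ^N} (|u(x)−u(y)|/|x−y|^{N/p+1} − λ)_+ dy dx ≤ 2^{N(p−1)/p} · ∬_{ℝ^N×ℝ^N} (|u(x)−u(y)|/|x−y|^{N/p+1} − 2^{N/p}λ)_+ dy dx, where (a)_+ = max{a,0}. -/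
open MeasureTheory ENNReal

noncomputable section

/-- Change of variables `y ↦ (x+y)/2` for lower integrals on `ℝ^N`. -/
lemma lintegral_half_smul_aux (N : ℕ) (g : Euc N → ℝ≥0∞) (hg : Measurable g) (x : Euc N) :
    ∫⁻ y : Euc N, g ((2:ℝ)⁻¹ • (x + y)) = ENNReal.ofReal ((2:ℝ)^N) * ∫⁻ y, g y := by
  have h1 : ∫⁻ y : Euc N, g ((2:ℝ)⁻¹ • (x + y)) = ∫⁻ y : Euc N, g ((2:ℝ)⁻¹ • y) :=
    lintegral_add_left_eq_self (fun y => g ((2:ℝ)⁻¹ • y)) x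
  have h2 : ∫⁻ y : Euc N, g ((2:ℝ)⁻¹ • y)
      = ∫⁻ y, g y ∂(Measure.map (((2:ℝ)⁻¹) • ·) volume) := by
    rw [lintegral_map hg (measurable_const_smul _)]
  rw [h1, h2, Measure.map_addHaar_smul volume (by norm_num : ((2:ℝ)⁻¹) ≠ 0),
    lintegral_smul_measure]
  congr 1
  rw [finrank_euclideanSpace_fin,
    show (((2:ℝ)⁻¹) ^ N)⁻¹ = (2:ℝ)^N by rw [inv_pow, inv_inv],
    abs_of_pos (by positivity)]

/-- For `1 ≤ p < ∞`, `λ > 0` and `u` measurable,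
`∬ (|u(x)-u(y)|/|x-y|^{N/p+1} - λ)₊ ≤ 2^{N(p-1)/p} ∬ (|u(x)-u(y)|/|x-y|^{N/p+1} - 2^{N/p}λ)₊`. -/
theorem stmt_14 (N : ℕ) (hN : 1 ≤ N) (p : ℝ) (hp : 1 ≤ p) (lam : ℝ) (hlam : 0 < lam)
    (u : Euc N → ℝ) (hu : Measurable u) :
    (∫⁻ z : Euc N × Euc N,
        ENNReal.ofReal (max (|u z.1 - u z.2| / ‖z.1 - z.2‖ ^ ((N : ℝ) / p + 1) - lam) 0)) ≤
      ENNReal.ofReal (2 ^ ((N : ℝ) * (p - 1) / p)) *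
        ∫⁻ z : Euc N × Euc N,
          ENNReal.ofReal (max (|u z.1 - u z.2| / ‖z.1 - z.2‖ ^ ((N : ℝ) / p + 1)
            - 2 ^ ((N : ℝ) / p) * lam) 0) := by
  have hp0 : (0:ℝ) < p := lt_of_lt_of_le one_pos hp
  set s : ℝ := (N:ℝ)/p + 1 with hs_def
  have hNp0 : (0:ℝ) ≤ (N:ℝ)/p := div_nonneg (Nat.cast_nonneg N) hp0.le
  have hs0 : (0:ℝ) < s := by positivity
  set Λ : ℝ := 2 ^ ((N:ℝ)/p) * lam with hΛ_def
  set w : Euc N × Euc N → ℝ := fun z => |u z.1 - u z.2| / ‖z.1 - z.2‖ ^ s with hw_def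
  set f : Euc N × Euc N → ℝ≥0∞ := fun z => ENNReal.ofReal (max (w z - Λ) 0) with hf_def
  have h2s : (0:ℝ) < 2 ^ s := Real.rpow_pos_of_pos two_pos s
  have h2Np : (0:ℝ) < 2 ^ ((N:ℝ)/p) := Real.rpow_pos_of_pos two_pos _
  have hwm : Measurable w :=
    ((hu.comp measurable_fst).sub (hu.comp measurable_snd)).abs.div
      ((Real.continuous_rpow_const hs0.le).measurable.comp
        (measurable_fst.sub measurable_snd).norm)
  have hfm : Measurable f := ((hwm.sub measurable_const).max measurable_const).ennreal_ofReal
  -- the key pointwise inequality via the midpoint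
  have key : ∀ z : Euc N × Euc N,
      ENNReal.ofReal (2 ^ s * max (w z - lam) 0)
        ≤ f (z.1, (2:ℝ)⁻¹ • (z.1 + z.2)) + f ((2:ℝ)⁻¹ • (z.1 + z.2), z.2) := by
    rintro ⟨x, y⟩
    by_cases hxy : x = y
    · have : w (x, y) = 0 := by
        simp [hw_def, hxy, Real.zero_rpow hs0.ne']
      rw [this]
      have : max (0 - lam) 0 = 0 := max_eq_right (by linarith)
      rw [this, mul_zero, ENNReal.ofReal_zero]
      exact zero_le
    · set m : Euc N := (2:ℝ)⁻¹ • (x + y) with hm_def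
      have hd : 0 < ‖x - y‖ := by
        rw [norm_pos_iff]; exact sub_ne_zero.mpr hxy
      have hxm : x - m = (2:ℝ)⁻¹ • (x - y) := by
        rw [hm_def]; module
      have hmy : m - y = (2:ℝ)⁻¹ • (x - y) := by
        rw [hm_def]; module
      have hnxm : ‖x - m‖ = 2⁻¹ * ‖x - y‖ := by
        rw [hxm, norm_smul]; norm_num
      have hnmy : ‖m - y‖ = 2⁻¹ * ‖x - y‖ := by
        rw [hmy, norm_smul]; norm_num
      set d : ℝ := ‖x - y‖
      set D : ℝ := d ^ s with hD_def
      set t : ℝ := (2⁻¹ * d) ^ s with ht_def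
      have hD : 0 < D := Real.rpow_pos_of_pos hd s
      have ht : 0 < t := Real.rpow_pos_of_pos (by positivity) s
      have htD : t = (2 ^ s)⁻¹ * D := by
        rw [ht_def, hD_def, Real.mul_rpow (by norm_num) hd.le,
          ← Real.inv_rpow (by norm_num : (0:ℝ) ≤ 2)]
      set a : ℝ := |u x - u y|
      set b : ℝ := |u x - u m|
      set c : ℝ := |u m - u y|
      have hbc : a ≤ b + c := abs_sub_le (u x) (u m) (u y)
      have ha0 : 0 ≤ a := abs_nonneg _
      have hat : a / t = 2 ^ s * (a / D) := by
        rw [htD]; field_simp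
      have h2Λ : 2 ^ s * lam = 2 * Λ := by
        rw [hΛ_def, hs_def, Real.rpow_add two_pos, Real.rpow_one]; ring
      have hwxy : w (x, y) = a / D := rfl
      have hwxm : w (x, m) = b / t := by
        simp only [hw_def]
        rw [hnxm]
      have hwmy : w (m, y) = c / t := by
        simp only [hw_def]
        rw [hnmy]
      have hreal : 2 ^ s * max (a / D - lam) 0 ≤ max (b / t - Λ) 0 + max (c / t - Λ) 0 := by
        have hsum : a / t ≤ b / t + c / t := by
          rw [← add_div]
          gcongr
        rcases max_cases (a / D - lam) 0 with ⟨h1, h2⟩ | ⟨h1, h2⟩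
        · rw [h1]
          have e : 2 ^ s * (a / D - lam) = a / t - 2 * Λ := by
            rw [mul_sub, ← hat, h2Λ]
          rw [e]
          have l1 := le_max_left (b / t - Λ) 0
          have l2 := le_max_left (c / t - Λ) 0
          linarith
        · rw [h1, mul_zero]
          have l1 := le_max_right (b / t - Λ) 0
          have l2 := le_max_right (c / t - Λ) 0
          linarith
      calc ENNReal.ofReal (2 ^ s * max (w (x, y) - lam) 0)
          ≤ ENNReal.ofReal (max (b / t - Λ) 0 + max (c / t - Λ) 0) := by
            rw [hwxy]; exact ENNReal.ofReal_le_ofReal hreal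
        _ = f (x, m) + f (m, y) := by
            rw [ENNReal.ofReal_add (le_max_right _ _) (le_max_right _ _),
              hf_def]
            simp only []
            rw [hwxm, hwmy]
  -- measurability of the two shifted functions
  have hmid : Measurable fun z : Euc N × Euc N => (2:ℝ)⁻¹ • (z.1 + z.2) :=
    (measurable_fst.add measurable_snd).fun_const_smul _
  have hT1 : Measurable fun z : Euc N × Euc N => f (z.1, (2:ℝ)⁻¹ • (z.1 + z.2)) :=
    hfm.comp (measurable_fst.prodMk hmid)
  have hT2 : Measurable fun z : Euc N × Euc N => f ((2:ℝ)⁻¹ • (z.1 + z.2), z.2) :=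
    hfm.comp (hmid.prodMk measurable_snd)
  set G : ℝ≥0∞ := ∫⁻ z : Euc N × Euc N, f z with hG_def
  -- change of variables for the first shifted integral
  have step1 : ∫⁻ z : Euc N × Euc N, f (z.1, (2:ℝ)⁻¹ • (z.1 + z.2))
      = ENNReal.ofReal ((2:ℝ)^N) * G := by
    rw [hG_def, Measure.volume_eq_prod,
      lintegral_prod _ hT1.aemeasurable, lintegral_prod _ hfm.aemeasurable]
    rw [← lintegral_const_mul' _ _ ENNReal.ofReal_ne_top]
    refine lintegral_congr fun x => ?_
    exact lintegral_half_smul_aux N (fun v => f (x, v))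
      (hfm.comp (measurable_const.prodMk measurable_id)) x
  have step2 : ∫⁻ z : Euc N × Euc N, f ((2:ℝ)⁻¹ • (z.1 + z.2), z.2)
      = ENNReal.ofReal ((2:ℝ)^N) * G := by
    rw [hG_def, Measure.volume_eq_prod,
      lintegral_prod_symm _ hT2.aemeasurable, lintegral_prod_symm _ hfm.aemeasurable]
    rw [← lintegral_const_mul' _ _ ENNReal.ofReal_ne_top]
    refine lintegral_congr fun y => ?_
    have : ∫⁻ x : Euc N, f ((2:ℝ)⁻¹ • (x + y), y)
        = ∫⁻ x : Euc N, f ((2:ℝ)⁻¹ • (y + x), y) := by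
      refine lintegral_congr fun x => ?_
      rw [add_comm]
    rw [this]
    exact lintegral_half_smul_aux N (fun v => f (v, y))
      (hfm.comp (measurable_id.prodMk measurable_const)) y
  -- put everything together
  have main : ENNReal.ofReal (2 ^ s) *
      (∫⁻ z : Euc N × Euc N, ENNReal.ofReal (max (w z - lam) 0))
      ≤ ENNReal.ofReal ((2:ℝ)^N) * G + ENNReal.ofReal ((2:ℝ)^N) * G := by
    calc ENNReal.ofReal (2 ^ s) *
        (∫⁻ z : Euc N × Euc N, ENNReal.ofReal (max (w z - lam) 0))
        = ∫⁻ z : Euc N × Euc N, ENNReal.ofReal (2 ^ s * max (w z - lam) 0) := by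
          rw [← lintegral_const_mul' _ _ ENNReal.ofReal_ne_top]
          refine lintegral_congr fun z => ?_
          rw [ENNReal.ofReal_mul h2s.le]
      _ ≤ ∫⁻ z : Euc N × Euc N,
            (f (z.1, (2:ℝ)⁻¹ • (z.1 + z.2)) + f ((2:ℝ)⁻¹ • (z.1 + z.2), z.2)) :=
          lintegral_mono key
      _ = (∫⁻ z : Euc N × Euc N, f (z.1, (2:ℝ)⁻¹ • (z.1 + z.2)))
            + ∫⁻ z : Euc N × Euc N, f ((2:ℝ)⁻¹ • (z.1 + z.2), z.2) :=
          lintegral_add_left hT1 _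
      _ = ENNReal.ofReal ((2:ℝ)^N) * G + ENNReal.ofReal ((2:ℝ)^N) * G := by
          rw [step1, step2]
  have hne0 : ENNReal.ofReal (2 ^ s) ≠ 0 := (ENNReal.ofReal_pos.mpr h2s).ne'
  rw [← ENNReal.mul_le_mul_iff_right hne0 ENNReal.ofReal_ne_top]
  refine le_trans main (le_of_eq ?_)
  rw [← mul_assoc, ← ENNReal.ofReal_mul h2s.le, ← Real.rpow_add two_pos]
  have hexp : s + (N:ℝ) * (p - 1) / p = ((N + 1 : ℕ) : ℝ) := by
    rw [hs_def]; push_cast; field_simp; ring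
  rw [hexp, Real.rpow_natCast, pow_succ, ENNReal.ofReal_mul (by positivity),
    ENNReal.ofReal_ofNat]
  ring
end
end

section
/- Let 1 ≤ p < ∞ and let u : ℝ → ℝ be the characteristic function of the interval [0,1]. There exists a constant c > 0 such that for every λ ≥ 1, ℒ^2(E_λ^{2/p}(u)) ≥ c/λ^p; consequently, for every 1 ≤ q < ∞, p · ∫_0^∞ λ^{q−1} ℒ^2(E_λ^{2/p}(u))^{q/p} dλ = ∞, i.e. (u(x)−u(y))/|x−y|^{2/p} does not belong to L^{p,q}(ℝ × ℝ) for any finite q. -/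
open MeasureTheory ENNReal

noncomputable section

/-- The characteristic function of the interval `[0,1]`. -/
def chi01 : ℝ → ℝ := fun x => if x ∈ Set.Icc (0 : ℝ) 1 then 1 else 0

lemma lintegral_inv_Ioi_one : ∫⁻ x in Set.Ioi (1 : ℝ), ENNReal.ofReal x⁻¹ = ∞ := by
  by_contra h
  have hfin : HasFiniteIntegral (fun x : ℝ => x⁻¹) (volume.restrict (Set.Ioi 1)) := by
    rw [hasFiniteIntegral_iff_ofReal]
    · exact lt_top_iff_ne_top.2 h
    · filter_upwards [ae_restrict_mem measurableSet_Ioi] with x hx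
      exact inv_nonneg.2 (le_of_lt (lt_trans one_pos hx))
  exact not_IntegrableOn_Ioi_inv ⟨measurable_inv.aestronglyMeasurable, hfin⟩

/-- For `u = χ_{[0,1]}` and `1 ≤ p < ∞`, there is `c > 0` with
`ℒ²(E_λ^{2/p}(u)) ≥ c/λ^p` for all `λ ≥ 1`; consequently the `L^{p,q}` quasinorm of
`(u(x)-u(y))/|x-y|^{2/p}` is infinite for every finite `q ≥ 1`. -/
theorem stmt_15 (p : ℝ) (hp : 1 ≤ p) :
    (∃ c : ℝ, 0 < c ∧ ∀ lam : ℝ, 1 ≤ lam →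
        ENNReal.ofReal (c / lam ^ p) ≤ volume (lvlSet1 chi01 (2 / p) lam)) ∧
      ∀ q : ℝ, 1 ≤ q →
        (ENNReal.ofReal p * ∫⁻ lam in Set.Ioi (0 : ℝ),
            ENNReal.ofReal (lam ^ (q - 1)) * volume (lvlSet1 chi01 (2 / p) lam) ^ (q / p)) = ∞ := by
  have hp0 : 0 < p := lt_of_lt_of_le one_pos hp
  have key : ∀ lam : ℝ, 1 ≤ lam →
      ENNReal.ofReal ((1/4 : ℝ) / lam ^ p) ≤ volume (lvlSet1 chi01 (2 / p) lam) := by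
    intro lam hlam
    have hlam0 : 0 < lam := lt_of_lt_of_le one_pos hlam
    set δ : ℝ := lam ^ (-(p/2)) with hδ
    have hδ0 : 0 < δ := Real.rpow_pos_of_pos hlam0 _
    have hδ1 : δ ≤ 1 := Real.rpow_le_one_of_one_le_of_nonpos hlam (by linarith)
    have hsub : Set.Icc (1 - δ/2) 1 ×ˢ Set.Ioc 1 (1 + δ/2) ⊆ lvlSet1 chi01 (2/p) lam := by
      rintro ⟨x, y⟩ ⟨⟨hx1, hx2⟩, hy1, hy2⟩
      have hux : chi01 x = 1 := by
        simp only [chi01, Set.mem_Icc]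
        exact if_pos ⟨by linarith, hx2⟩
      have huy : chi01 y = 0 := by
        simp only [chi01, Set.mem_Icc]
        exact if_neg (by push_neg; intro _; linarith)
      simp only [lvlSet1, Set.mem_setOf_eq, hux, huy, sub_zero, abs_one]
      have hxy : |x - y| ≤ δ := by
        rw [abs_sub_comm, abs_of_nonneg (by linarith)]; linarith
      have h1 : |x - y| ^ (2/p) ≤ δ ^ (2/p) :=
        Real.rpow_le_rpow (abs_nonneg _) hxy (by positivity)
      have h2 : δ ^ (2/p) = lam⁻¹ := by
        rw [hδ, ← Real.rpow_mul hlam0.le,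
          show -(p/2) * (2/p) = -1 by field_simp, Real.rpow_neg_one]
      calc lam * |x - y| ^ (2/p) ≤ lam * δ ^ (2/p) :=
            mul_le_mul_of_nonneg_left h1 hlam0.le
        _ = 1 := by rw [h2]; field_simp
    refine le_trans ?_ (measure_mono hsub)
    have hvol : volume (Set.Icc (1 - δ/2) 1 ×ˢ Set.Ioc 1 (1 + δ/2)) =
        ENNReal.ofReal (δ/2) * ENNReal.ofReal (δ/2) := by
      rw [Measure.volume_eq_prod, Measure.prod_prod, Real.volume_Icc, Real.volume_Ioc]
      congr 2 <;> ring
    rw [hvol, ← ENNReal.ofReal_mul (by positivity)]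
    apply ENNReal.ofReal_le_ofReal
    have hδδ : δ * δ = (lam ^ p)⁻¹ := by
      rw [hδ, ← Real.rpow_add hlam0, show -(p/2) + -(p/2) = -p by ring,
        Real.rpow_neg hlam0.le]
    calc (1/4 : ℝ) / lam ^ p = (lam ^ p)⁻¹ / 4 := by ring
      _ = δ * δ / 4 := by rw [hδδ]
      _ ≤ δ/2 * (δ/2) := by ring_nf; exact le_rfl
  refine ⟨⟨1/4, by norm_num, key⟩, ?_⟩
  intro q hq
  have hq0 : 0 < q := lt_of_lt_of_le one_pos hq
  have hC : (0 : ℝ) < (1/4 : ℝ) ^ (q/p) := by positivity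
  have hI : (∫⁻ lam in Set.Ioi (0:ℝ),
      ENNReal.ofReal (lam ^ (q - 1)) * volume (lvlSet1 chi01 (2 / p) lam) ^ (q / p)) = ∞ := by
    have hinf : ∫⁻ lam in Set.Ioi (1:ℝ), ENNReal.ofReal ((1/4 : ℝ) ^ (q/p) * lam⁻¹) = ∞ := by
      simp_rw [ENNReal.ofReal_mul hC.le]
      rw [lintegral_const_mul' _ _ ENNReal.ofReal_ne_top, lintegral_inv_Ioi_one,
        ENNReal.mul_top (ENNReal.ofReal_pos.2 hC).ne']
    have lb : ∀ᵐ lam ∂(volume.restrict (Set.Ioi (1:ℝ))),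
        ENNReal.ofReal ((1/4 : ℝ) ^ (q/p) * lam⁻¹) ≤
          ENNReal.ofReal (lam ^ (q - 1)) * volume (lvlSet1 chi01 (2 / p) lam) ^ (q / p) := by
      filter_upwards [ae_restrict_mem measurableSet_Ioi] with lam hlam
      have hlam1 : (1:ℝ) ≤ lam := le_of_lt hlam
      have hlam0 : (0:ℝ) < lam := lt_of_lt_of_le one_pos hlam1
      have h1 : ENNReal.ofReal ((1/4 : ℝ) / lam ^ p) ^ (q/p) ≤
          volume (lvlSet1 chi01 (2 / p) lam) ^ (q / p) :=
        ENNReal.rpow_le_rpow (key lam hlam1) (by positivity)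
      have hpos : (0:ℝ) < (1/4 : ℝ) / lam ^ p := by positivity
      have einv : lam ^ (q-1) * (lam ^ q)⁻¹ = lam⁻¹ := by
        rw [← Real.rpow_neg hlam0.le, ← Real.rpow_add hlam0,
          show q - 1 + -q = -1 by ring, Real.rpow_neg_one]
      have ereal : lam ^ (q-1) * ((1/4 : ℝ) / lam ^ p) ^ (q/p) = (1/4 : ℝ) ^ (q/p) * lam⁻¹ := by
        rw [Real.div_rpow (by norm_num) (Real.rpow_nonneg hlam0.le p),
          ← Real.rpow_mul hlam0.le, show p * (q/p) = q by field_simp,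
          div_eq_mul_inv,
          show lam ^ (q-1) * ((1/4 : ℝ) ^ (q/p) * (lam ^ q)⁻¹) =
            (1/4 : ℝ) ^ (q/p) * (lam ^ (q-1) * (lam ^ q)⁻¹) from by ring, einv]
      calc ENNReal.ofReal ((1/4 : ℝ) ^ (q/p) * lam⁻¹)
          = ENNReal.ofReal (lam ^ (q-1)) * ENNReal.ofReal ((1/4 : ℝ) / lam ^ p) ^ (q/p) := by
            rw [ENNReal.ofReal_rpow_of_pos hpos, ← ENNReal.ofReal_mul (by positivity), ereal]
        _ ≤ _ := mul_le_mul_right h1 _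
    refine top_le_iff.1 ?_
    calc (⊤ : ℝ≥0∞) = ∫⁻ lam in Set.Ioi (1:ℝ), ENNReal.ofReal ((1/4 : ℝ) ^ (q/p) * lam⁻¹) :=
          hinf.symm
      _ ≤ ∫⁻ lam in Set.Ioi (1:ℝ),
            ENNReal.ofReal (lam ^ (q - 1)) * volume (lvlSet1 chi01 (2 / p) lam) ^ (q / p) :=
          lintegral_mono_ae lb
      _ ≤ _ := lintegral_mono_set (Set.Ioi_subset_Ioi zero_le_one)
  rw [hI, ENNReal.mul_top (ENNReal.ofReal_pos.2 hp0).ne']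
end
end
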